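/- Product formula for Riordan matrices: let d, f be formal power series over ℝ, and let h, g be formal power series over ℝ with zero constant coefficient. Then for all natural numbers i, j: Σ_{k=0}^{i} [t^i](d·h^k) · [t^k](f·g^j) = [t^i]( d·(f ∘ h)·(g ∘ h)^j ). In other words, the matrix product of the generalized Riordan matrices R(d,h) and R(f,g) equals the generalized Riordan matrix R(d·(f ∘ h), g ∘ h), entry by entry. -/

import Mathlib

open PowerSeries

noncomputable section

/-- Formal composition (substitution) `f ∘ h` of formal power series: for `h` with zero
constant coefficient, the `n`-th coefficient of `f ∘ h` is
`Σ_{j=0}^{n} [t^j]f · [t^n](h^j)` (the terms with `j > n` vanish since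
`[t^n](h^j) = 0` for `j > n`). -/
def PowerSeries.compSubst (f h : PowerSeries ℝ) : PowerSeries ℝ :=
  PowerSeries.mk fun n =>
    ∑ j ∈ Finset.range (n + 1), PowerSeries.coeff j f * PowerSeries.coeff n (h ^ j)

/-!
`compSubst h` agrees with Mathlib's substitution `subst h`, which is an algebra homomorphism,
so `(f * g ^ j) ∘ h = (f ∘ h) * (g ∘ h) ^ j`. It remains to expand
`[t^i](d * (F ∘ h))`, for `F = f * g ^ j`, as `Σ_k [t^i](d * h^k) * [t^k]F`; only `k ≤ i`
contribute because `h ^ k` has order at least `k`.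
-/

open Finset

namespace PowerSeries

lemma coeff_pow_eq_zero_of_lt {R : Type*} [Semiring R] {h : R⟦X⟧}
    (hh : constantCoeff h = 0) {n k : ℕ} (hnk : n < k) : coeff n (h ^ k) = 0 :=
  coeff_of_lt_order n ((Nat.cast_lt.2 hnk).trans_le (le_order_pow_of_constantCoeff_eq_zero k hh))

variable {h : ℝ⟦X⟧}

lemma coeff_compSubst_eq_sum_range (f : ℝ⟦X⟧) (hh : constantCoeff h = 0) {n N : ℕ}
    (hnN : n ≤ N) :
    coeff n (f.compSubst h) = ∑ k ∈ range (N + 1), coeff k f * coeff n (h ^ k) := by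
  rw [compSubst, coeff_mk]
  refine sum_subset (range_subset_range.2 (by omega)) fun k _ hk => ?_
  rw [coeff_pow_eq_zero_of_lt hh (by simpa using hk), mul_zero]

lemma compSubst_eq_subst (f : ℝ⟦X⟧) (hh : constantCoeff h = 0) :
    f.compSubst h = f.subst h := by
  ext n
  rw [coeff_subst' (HasSubst.of_constantCoeff_zero' hh),
    finsum_eq_sum_of_support_subset (s := range (n + 1))]
  · simp [compSubst]
  · intro k hk
    by_contra hkn
    exact hk (by simp [coeff_pow_eq_zero_of_lt hh (show n < k by simpa using hkn)])

lemma compSubst_mul (f g : ℝ⟦X⟧) (hh : constantCoeff h = 0) :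
    (f * g).compSubst h = f.compSubst h * g.compSubst h := by
  simp only [compSubst_eq_subst _ hh, subst_mul (HasSubst.of_constantCoeff_zero' hh)]

lemma compSubst_pow (g : ℝ⟦X⟧) (hh : constantCoeff h = 0) (j : ℕ) :
    (g ^ j).compSubst h = g.compSubst h ^ j := by
  simp only [compSubst_eq_subst _ hh, subst_pow (HasSubst.of_constantCoeff_zero' hh)]

lemma coeff_mul_compSubst (d F : ℝ⟦X⟧) (hh : constantCoeff h = 0) (n : ℕ) :
    coeff n (d * F.compSubst h) = ∑ k ∈ range (n + 1), coeff n (d * h ^ k) * coeff k F := by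
  calc coeff n (d * F.compSubst h)
      = ∑ p ∈ antidiagonal n, ∑ k ∈ range (n + 1),
          coeff p.1 d * coeff p.2 (h ^ k) * coeff k F := by
        rw [coeff_mul]
        refine sum_congr rfl fun p hp => ?_
        rw [coeff_compSubst_eq_sum_range F hh (HasAntidiagonal.antidiagonal.snd_le hp), mul_sum]
        exact sum_congr rfl fun k _ => by ring
    _ = ∑ k ∈ range (n + 1), coeff n (d * h ^ k) * coeff k F := by
        rw [sum_comm]
        simp only [coeff_mul, sum_mul]

end PowerSeries

theorem riordan_matrix_product_general
    (d f h g : PowerSeries ℝ)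
    (hh : PowerSeries.constantCoeff h = 0)
    (i j : ℕ) :
    ∑ k ∈ Finset.range (i + 1),
        PowerSeries.coeff i (d * h ^ k) * PowerSeries.coeff k (f * g ^ j) =
      PowerSeries.coeff i (d * f.compSubst h * (g.compSubst h) ^ j) := by
  rw [mul_assoc, ← compSubst_pow g hh, ← compSubst_mul f _ hh, coeff_mul_compSubst d _ hh]

/-- Product formula for generalized Riordan matrices:
`R(d,h) · R(f,g) = R(d·(f ∘ h), g ∘ h)`, entry by entry. -/
theorem riordan_matrix_product
    (d f h g : PowerSeries ℝ)
    (hh : PowerSeries.constantCoeff h = 0)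
    (hg : PowerSeries.constantCoeff g = 0) (i j : ℕ) :
    ∑ k ∈ Finset.range (i + 1),
        PowerSeries.coeff i (d * h ^ k) * PowerSeries.coeff k (f * g ^ j) =
      PowerSeries.coeff i (d * f.compSubst h * (g.compSubst h) ^ j) :=
  riordan_matrix_product_general d f h g hh i j
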